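/- Let X be a set, H ≥ 1 and K ≥ 1 integers, F a class of functions from X to [0, H+1], β ≥ 0, and ε > 0 with d := dim_E(F, ε) satisfying 1 ≤ d < ∞. Let z^k_h ∈ X for (k,h) ∈ [K]×[H], and for each k ∈ [K] let Z^k denote the multiset {z^τ_{h'} : τ ∈ [k−1], h' ∈ [H]}. Suppose that for each (k,h) ∈ [K]×[H] there are f^k_h ∈ F and a function b^k_h : X → ℝ such that b^k_h(x) ≤ w({f ∈ F : ‖f − f^k_h‖²_{Z^k} ≤ 9β + 12}, x) for every x ∈ X. Then the number of pairs (k,h) ∈ [K]×[H] with b^k_h(z^k_h) > ε is at most ((36β + 48)/ε² + H) · d. -/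

import Mathlib

/-- The squared data norm `‖g‖_Z² = ∑_{z ∈ Z} g(z)²`, counting multiplicity. -/
noncomputable def msNormSq {X : Type*} (Z : Multiset X) (g : X → ℝ) : ℝ :=
  (Z.map fun x => g x ^ 2).sum

/-- The data norm `‖g‖_Z = (∑_{z ∈ Z} g(z)²)^{1/2}`. -/
noncomputable def msNorm {X : Type*} (Z : Multiset X) (g : X → ℝ) : ℝ :=
  Real.sqrt (msNormSq Z g)

/-- `z` is `ε`-dependent on the multiset `Z` with respect to the function class `F`. -/
def EpsDep {X : Type*} (F : Set (X → ℝ)) (ε : ℝ) (Z : Multiset X) (z : X) : Prop :=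
  ∀ f ∈ F, ∀ f' ∈ F, msNorm Z (fun x => f x - f' x) ≤ ε → |f z - f' z| ≤ ε

/-- There is a sequence of length `n` in `X` such that, for some `ε' ≥ ε`, every element
is `ε'`-independent of its predecessors with respect to `F`. -/
def EluderLen {X : Type*} (F : Set (X → ℝ)) (ε : ℝ) (n : ℕ) : Prop :=
  ∃ ε' ≥ ε, ∃ l : Fin n → X, ∀ i : Fin n,
    ¬ EpsDep F ε' ((Finset.univ.filter (fun j => j < i)).val.map l) (l i)

/-- The width of a set of functions `G` at a point `x`. -/
noncomputable def width {X : Type*} (G : Set (X → ℝ)) (x : X) : ℝ :=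
  sSup {r : ℝ | ∃ f ∈ G, ∃ f' ∈ G, r = f x - f' x}

/-!
Assign the large-bonus points, in chronological order, greedily to buckets: each point goes to
the first bucket of which it is `ε`-independent. Every bucket is then an `ε`-independent
sequence, so it holds at most `d` points, and the point `z^k_h` that lands in the last bucket `J`
is `ε`-dependent on each of the `J` buckets before it. The witness pair `f, f'` of its large bonus
differs by more than `ε` at `z^k_h`, hence by more than `ε` in data norm on each of these buckets.
At most `H - 1` of them contain points of episode `k`; the others are disjoint pieces of `Z^k`,
on which `‖f - f'‖² ≤ 2 (9β + 12) + 2 (9β + 12) = 36β + 48`. So `J ≤ (36β + 48)/ε² + H - 1`,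
and the number of points is at most `(J + 1) d`.
-/

open Finset

section DataNorm

variable {X : Type*}

lemma msNormSq_nonneg (Z : Multiset X) (g : X → ℝ) : 0 ≤ msNormSq Z g :=
  Multiset.sum_nonneg fun _ hy => by
    obtain ⟨x, -, rfl⟩ := Multiset.mem_map.1 hy
    positivity

lemma msNormSq_mono {Z₁ Z₂ : Multiset X} (h : Z₁ ≤ Z₂) (g : X → ℝ) :
    msNormSq Z₁ g ≤ msNormSq Z₂ g := by
  obtain ⟨W, rfl⟩ := Multiset.le_iff_exists_add.1 h
  simp only [msNormSq, Multiset.map_add, Multiset.sum_add, le_add_iff_nonneg_right]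
  exact msNormSq_nonneg W g

lemma msNormSq_map_val {ι : Type*} (s : Finset ι) (x : ι → X) (g : X → ℝ) :
    msNormSq (s.val.map x) g = ∑ i ∈ s, g (x i) ^ 2 := by
  simp only [msNormSq, Multiset.map_map]
  rfl

lemma msNormSq_sub_le (Z : Multiset X) (f f' g : X → ℝ) :
    msNormSq Z (fun x => f x - f' x) ≤
      2 * msNormSq Z (fun x => f x - g x) + 2 * msNormSq Z (fun x => f' x - g x) := by
  simp only [msNormSq, ← Multiset.sum_map_mul_left, ← Multiset.sum_map_add]
  exact Multiset.sum_map_le_sum_map _ _ fun x _ => by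
    nlinarith [sq_nonneg (f x + f' x - 2 * g x)]

end DataNorm

section Eluder

variable {X : Type*} {F : Set (X → ℝ)} {ε : ℝ}

lemma EpsDep.sq_lt_msNormSq {Z : Multiset X} {y : X} (h : EpsDep F ε Z y) (hε : 0 ≤ ε)
    {f f' : X → ℝ} (hf : f ∈ F) (hf' : f' ∈ F) (hgap : ε < f y - f' y) :
    ε ^ 2 < msNormSq Z (fun x => f x - f' x) := by
  by_contra! hle
  have hnorm : msNorm Z (fun x => f x - f' x) ≤ ε := by
    rw [msNorm, ← Real.sqrt_sq hε]
    exact Real.sqrt_le_sqrt hle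
  linarith [le_abs_self (f y - f' y), h f hf f' hf' hnorm]

lemma not_epsDep_zero {y : X} (hε : 0 ≤ ε) {f f' : X → ℝ} (hf : f ∈ F) (hf' : f' ∈ F)
    (hgap : ε < f y - f' y) : ¬ EpsDep F ε 0 y := fun h => by
  have := h.sq_lt_msNormSq hε hf hf' hgap
  simp only [msNormSq, Multiset.map_zero, Multiset.sum_zero] at this
  nlinarith

lemma exists_lt_sub_of_lt_width {G : Set (X → ℝ)} {x : X} (hε : 0 ≤ ε) (h : ε < width G x) :
    ∃ f ∈ G, ∃ f' ∈ G, ε < f x - f' x := by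
  by_contra! hle
  exact h.not_ge (Real.sSup_le (by rintro _ ⟨f, hf, f', hf', rfl⟩; exact hle f hf f' hf') hε)

section GreedyBucketing

variable {ι : Type*} [LinearOrder ι]

lemma card_le_of_forall_not_epsDep {d : ℕ} (hd : d ∈ upperBounds {n | EluderLen F ε n})
    (x : ι → X) (T : Finset ι) (hT : ∀ i ∈ T, ¬ EpsDep F ε ((T.filter (· < i)).val.map x) (x i)) :
    T.card ≤ d := by
  set e := T.orderEmbOfFin rfl
  have hprefix : ∀ t, (univ.filter (· < t)).map e.toEmbedding = T.filter (· < e t) := by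
    intro t
    ext m
    simp only [mem_map, mem_filter, mem_univ, true_and, RelEmbedding.coe_toEmbedding]
    constructor
    · rintro ⟨u, hut, rfl⟩
      exact ⟨T.orderEmbOfFin_mem rfl u, e.strictMono hut⟩
    · rintro ⟨hm, hmt⟩
      obtain ⟨u, rfl⟩ : m ∈ Set.range e := by rwa [T.range_orderEmbOfFin]
      exact ⟨u, e.lt_iff_lt.1 hmt, rfl⟩
  refine hd ⟨ε, le_rfl, x ∘ e, fun t => ?_⟩
  rw [← Multiset.map_map,
    show (univ.filter (· < t)).val.map e = _ from congrArg Finset.val (hprefix t)]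
  exact hT _ (T.orderEmbOfFin_mem rfl t)

def bucketPrefix (x : ι → X) (s : Finset ι) (a : ι → ℕ) (j : ℕ) (i : ι) : Multiset X :=
  (s.filter fun m => m < i ∧ a m = j).val.map x

def IsGreedyBucketing (F : Set (X → ℝ)) (ε : ℝ) (x : ι → X) (s : Finset ι) (a : ι → ℕ) :
    Prop :=
  ∀ i ∈ s, ¬ EpsDep F ε (bucketPrefix x s a (a i) i) (x i) ∧
    ∀ j < a i, EpsDep F ε (bucketPrefix x s a j i) (x i)

lemma exists_isGreedyBucketing (x : ι → X) (s : Finset ι)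
    (h0 : ∀ i ∈ s, ¬ EpsDep F ε 0 (x i)) : ∃ a, IsGreedyBucketing F ε x s a := by
  classical
  induction s using Finset.induction_on_max with
  | empty => exact ⟨0, by simp [IsGreedyBucketing]⟩
  | insert t s hlt ih =>
    obtain ⟨a, ha⟩ := ih fun i hi => h0 i (mem_insert_of_mem hi)
    set D := {j | ¬ EpsDep F ε ((s.filter (a · = j)).val.map x) (x t)}
    have hD : D.Nonempty := by
      obtain ⟨j, hj⟩ := Infinite.exists_notMem_finset (s.image a)
      have hempty : s.filter (a · = j) = ∅ :=
        filter_eq_empty_iff.2 fun m hm hmj => hj (hmj ▸ mem_image_of_mem a hm)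
      refine ⟨j, ?_⟩
      simpa only [D, Set.mem_ofPred_eq, hempty, empty_val, Multiset.map_zero]
        using h0 t (mem_insert_self t s)
    set a' := Function.update a t (sInf D)
    have ha' : ∀ m ∈ s, a' m = a m := fun m hm =>
      Function.update_of_ne (hlt m hm).ne _ _
    have hold : ∀ i ∈ s, ∀ j, bucketPrefix x (insert t s) a' j i = bucketPrefix x s a j i := by
      intro i hi j
      rw [bucketPrefix, filter_insert, if_neg fun h => (hlt i hi).not_gt h.1]
      exact congrArg (fun u : Finset ι => u.val.map x) (filter_congr fun m hm => by rw [ha' m hm])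
    have hnew : ∀ j, bucketPrefix x (insert t s) a' j t = (s.filter (a · = j)).val.map x := by
      intro j
      rw [bucketPrefix, filter_insert, if_neg fun h => lt_irrefl t h.1]
      exact congrArg (fun u : Finset ι => u.val.map x)
        (filter_congr fun m hm => by simp only [ha' m hm, hlt m hm, true_and])
    refine ⟨a', fun i hi => ?_⟩
    rcases mem_insert.1 hi with rfl | hi
    · simp only [a', Function.update_self, hnew]
      exact ⟨Nat.sInf_mem hD, fun j hj => by simpa [D] using Nat.notMem_of_lt_sInf hj⟩
    · simp only [ha' i hi, hold i hi]
      exact ha i hi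

namespace IsGreedyBucketing

variable {x : ι → X} {s : Finset ι} {a : ι → ℕ} {d : ℕ}

lemma card_bucket_le (ha : IsGreedyBucketing F ε x s a)
    (hd : d ∈ upperBounds {n | EluderLen F ε n}) (j : ℕ) : (s.filter (a · = j)).card ≤ d := by
  refine card_le_of_forall_not_epsDep hd x _ fun i hi => ?_
  obtain ⟨his, rfl⟩ := mem_filter.1 hi
  have hprefix : (s.filter (a · = a i)).filter (· < i) = s.filter fun m => m < i ∧ a m = a i := by
    ext m
    simp only [mem_filter]
    tauto
  rw [hprefix]
  exact (ha i his).1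

lemma exists_card_le (ha : IsGreedyBucketing F ε x s a)
    (hd : d ∈ upperBounds {n | EluderLen F ε n}) (hs : s.Nonempty) :
    ∃ i ∈ s, s.card ≤ (a i + 1) * d := by
  obtain ⟨i, his, hmax⟩ := s.exists_max_image a hs
  refine ⟨i, his, ?_⟩
  calc s.card ≤ d * (range (a i + 1)).card :=
        card_le_mul_card_image_of_maps_to (fun m hm => mem_range_succ_iff.2 (hmax m hm)) d
          fun j _ => ha.card_bucket_le hd j
    _ = (a i + 1) * d := by rw [card_range, mul_comm]

end IsGreedyBucketing

lemma card_epsDep_buckets_le {x : ι → X} {s : Finset ι} {a : ι → ℕ} {i : ι} {J : ℕ}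
    (hdep : ∀ j < J, EpsDep F ε (bucketPrefix x s a j i) (x i)) (hε : 0 < ε)
    {f f' : X → ℝ} (hf : f ∈ F) (hf' : f' ∈ F) (hgap : ε < f (x i) - f' (x i))
    (old : Finset ι) :
    (J : ℝ) ≤ msNormSq (old.val.map x) (fun y => f y - f' y) / ε ^ 2 +
      ((s.filter (· < i)) \ old).card := by
  classical
  set g := fun y => f y - f' y
  set new := (s.filter (· < i)) \ old
  set U := range J \ new.image a
  have hJ : J ≤ U.card + new.card :=
    calc J = (range J).card := (card_range J).symm
      _ ≤ U.card + (new.image a).card := card_le_card_sdiff_add_card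
      _ ≤ U.card + new.card := Nat.add_le_add_left card_image_le _
  have hU : (U.card : ℝ) * ε ^ 2 ≤ msNormSq (old.val.map x) g := by
    have hfiber : ∀ j ∈ U, ((s.filter (· < i)).filter (a · ∈ U)).filter (a · = j) =
        s.filter fun m => m < i ∧ a m = j := fun j hj => by
      ext m
      simp only [mem_filter]
      constructor
      · rintro ⟨⟨⟨hm, hmi⟩, -⟩, hmj⟩
        exact ⟨hm, hmi, hmj⟩
      · rintro ⟨hm, hmi, rfl⟩
        exact ⟨⟨⟨hm, hmi⟩, hj⟩, rfl⟩
    have hold : (s.filter (· < i)).filter (a · ∈ U) ⊆ old := fun m hm => by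
      obtain ⟨hm, hmU⟩ := mem_filter.1 hm
      by_contra hmo
      exact (mem_sdiff.1 hmU).2 (mem_image_of_mem a (mem_sdiff.2 ⟨hm, hmo⟩))
    calc (U.card : ℝ) * ε ^ 2 = ∑ _j ∈ U, ε ^ 2 := by rw [sum_const, nsmul_eq_mul]
      _ ≤ ∑ j ∈ U, ∑ m ∈ s.filter (fun m => m < i ∧ a m = j), g (x m) ^ 2 := by
          gcongr with j hj
          rw [← msNormSq_map_val]
          exact ((hdep j (mem_range.1 (mem_sdiff.1 hj).1)).sq_lt_msNormSq hε.le hf hf' hgap).le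
      _ = ∑ m ∈ (s.filter (· < i)).filter (a · ∈ U), g (x m) ^ 2 := by
          rw [← sum_fiberwise_of_maps_to (fun m hm => (mem_filter.1 hm).2)]
          exact sum_congr rfl fun j hj => by rw [hfiber j hj]
      _ ≤ ∑ m ∈ old, g (x m) ^ 2 := sum_le_sum_of_subset_of_nonneg hold fun _ _ _ => sq_nonneg _
      _ = msNormSq (old.val.map x) g := (msNormSq_map_val _ _ _).symm
  have hUε : (U.card : ℝ) ≤ msNormSq (old.val.map x) g / ε ^ 2 := by
    rwa [le_div_iff₀ (by positivity)]
  calc (J : ℝ) ≤ U.card + new.card := by exact_mod_cast hJ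
    _ ≤ _ := by linarith

end GreedyBucketing

section Episodes

/-- The multiset `Z^k` of the paper. -/
def dataBefore (z : ℕ → ℕ → X) (H k : ℕ) : Multiset X :=
  (Icc 1 (k - 1) ×ˢ Icc 1 H).val.map fun q => z q.1 q.2

variable {z : ℕ → ℕ → X} {H : ℕ} {S : Finset (ℕ × ℕ)}

lemma map_filter_fst_lt_le_dataBefore (hS : ∀ p ∈ S, 1 ≤ p.1 ∧ 1 ≤ p.2 ∧ p.2 ≤ H) (k : ℕ) :
    (S.filter (·.1 < k)).val.map (fun p => z p.1 p.2) ≤ dataBefore z H k := by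
  refine Multiset.map_le_map (val_le_iff.2 fun p hp => ?_)
  obtain ⟨hpS, hpk⟩ := mem_filter.1 hp
  obtain ⟨h1, h2, h3⟩ := hS p hpS
  simp only [mem_product, mem_Icc]
  omega

lemma card_filter_fst_eq_snd_lt_le (hS : ∀ p ∈ S, 1 ≤ p.2) (k h : ℕ) :
    (S.filter fun p => p.1 = k ∧ p.2 < h).card ≤ h - 1 := by
  calc (S.filter fun p => p.1 = k ∧ p.2 < h).card ≤ (Ico 1 h).card := by
        refine card_le_card_of_injOn Prod.snd (fun p hp => ?_) fun p hp p' hp' hpp' => ?_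
        · obtain ⟨hpS, -, hph⟩ := mem_filter.1 hp
          exact mem_Ico.2 ⟨hS p hpS, hph⟩
        · exact Prod.ext ((mem_filter.1 hp).2.1.trans (mem_filter.1 hp').2.1.symm) hpp'
    _ = h - 1 := Nat.card_Ico 1 h

lemma filter_lt_toLex_sdiff_subset {α β : Type*} [LinearOrder α] [LinearOrder β]
    (S : Finset (α × β)) (q : α × β) :
    ((S.map toLex.toEmbedding).filter (· < toLex q)) \
        (S.filter (·.1 < q.1)).map toLex.toEmbedding ⊆
      (S.filter fun p => p.1 = q.1 ∧ p.2 < q.2).map toLex.toEmbedding := by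
  intro m hm
  simp only [mem_sdiff, mem_filter, mem_map_equiv, not_and] at hm ⊢
  obtain ⟨⟨hmS, hmq⟩, hm⟩ := hm
  refine ⟨hmS, ?_⟩
  rcases Prod.Lex.toLex_lt_toLex.1 hmq with hlt | hsame
  · exact absurd hlt (hm hmS)
  · exact hsame

end Episodes

theorem card_le_of_forall_exists_gap {z : ℕ → ℕ → X} {H d : ℕ} {L : ℝ} (hε : 0 < ε)
    (hL : 0 ≤ L) (hd : d ∈ upperBounds {n | EluderLen F ε n}) {S : Finset (ℕ × ℕ)}
    (hS : ∀ p ∈ S, 1 ≤ p.1 ∧ 1 ≤ p.2 ∧ p.2 ≤ H)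
    (hgap : ∀ p ∈ S, ∃ f ∈ F, ∃ f' ∈ F,
      msNormSq (dataBefore z H p.1) (fun y => f y - f' y) ≤ L ∧
        ε < f (z p.1 p.2) - f' (z p.1 p.2)) :
    (S.card : ℝ) ≤ (L / ε ^ 2 + H) * d := by
  rcases S.eq_empty_or_nonempty with rfl | hne
  · simp only [card_empty, Nat.cast_zero]
    positivity
  set e := (toLex : ℕ × ℕ ≃ ℕ ×ₗ ℕ).toEmbedding
  set x : ℕ ×ₗ ℕ → X := fun m => z (ofLex m).1 (ofLex m).2
  choose! f hf f' hf' hfL hfgap using hgap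
  have h0 : ∀ m ∈ S.map e, ¬ EpsDep F ε 0 (x m) := forall_mem_map.2 fun p hp =>
    not_epsDep_zero hε.le (hf p hp) (hf' p hp) (hfgap p hp)
  obtain ⟨a, ha⟩ := exists_isGreedyBucketing x _ h0
  obtain ⟨_, hiS, hcard⟩ := ha.exists_card_le hd (hne.map (f := e))
  obtain ⟨q, hq, rfl⟩ := mem_map.1 hiS
  set old := (S.filter (·.1 < q.1)).map e
  have hbuckets := card_epsDep_buckets_le (ha _ hiS).2 hε (hf q hq) (hf' q hq) (hfgap q hq) old
  have hold : msNormSq (old.val.map x) (fun y => f q y - f' q y) ≤ L := by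
    rw [map_val, Multiset.map_map]
    exact (msNormSq_mono (map_filter_fst_lt_le_dataBefore hS q.1) _).trans (hfL q hq)
  have hnew : (((S.map e).filter (· < e q)) \ old).card + 1 ≤ H := by
    have hcard_new : (((S.map e).filter (· < e q)) \ old).card ≤ q.2 - 1 :=
      calc _ ≤ _ := card_le_card (filter_lt_toLex_sdiff_subset S q)
        _ = _ := card_map _
        _ ≤ q.2 - 1 := card_filter_fst_eq_snd_lt_le (fun p hp => (hS p hp).2.1) q.1 q.2
    have := hS q hq
    omega
  have hJ : (a (e q) : ℝ) + 1 ≤ L / ε ^ 2 + H := by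
    have hnew' : ((((S.map e).filter (· < e q)) \ old).card : ℝ) + 1 ≤ H := by
      exact_mod_cast hnew
    linarith [div_le_div_of_nonneg_right hold (sq_nonneg ε)]
  calc (S.card : ℝ) = (S.map e).card := by rw [card_map]
    _ ≤ ((a (e q) + 1 : ℕ) : ℝ) * d := by exact_mod_cast hcard
    _ ≤ (L / ε ^ 2 + H) * d := by push_cast; gcongr

end Eluder

theorem count_large_bonus_general {X : Type*} (H K : ℕ)
    (F : Set (X → ℝ))
    (β : ℝ) (hβ : 0 ≤ β) (ε : ℝ) (hε : 0 < ε)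
    (d : ℕ) (hd : IsGreatest {n : ℕ | EluderLen F ε n} d)
    (z : ℕ → ℕ → X)
    (fk : ℕ → ℕ → (X → ℝ))
    (b : ℕ → ℕ → X → ℝ)
    (hb : ∀ k ∈ Finset.Icc 1 K, ∀ h ∈ Finset.Icc 1 H, ∀ x : X,
      b k h x ≤ width {f ∈ F |
        msNormSq (((Finset.Icc 1 (k - 1) ×ˢ Finset.Icc 1 H).val).map
            (fun q : ℕ × ℕ => z q.1 q.2)) (fun x => f x - fk k h x) ≤ 9 * β + 12} x) :
    ({q : ℕ × ℕ | q.1 ∈ Finset.Icc 1 K ∧ q.2 ∈ Finset.Icc 1 H ∧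
        ε < b q.1 q.2 (z q.1 q.2)}.ncard : ℝ) ≤
      ((36 * β + 48) / ε ^ 2 + H) * d := by
  set S := (Icc 1 K ×ˢ Icc 1 H).filter fun q => ε < b q.1 q.2 (z q.1 q.2)
  have hS : {q : ℕ × ℕ | q.1 ∈ Icc 1 K ∧ q.2 ∈ Icc 1 H ∧ ε < b q.1 q.2 (z q.1 q.2)} = ↑S := by
    ext q
    simp only [S, coe_filter, mem_product, Set.mem_ofPred_eq, and_assoc]
  rw [hS, Set.ncard_coe_finset]
  refine card_le_of_forall_exists_gap (z := z) hε (by positivity) hd.2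
    (fun p hp => ?_) fun p hp => ?_
  · simp only [S, mem_filter, mem_product, mem_Icc] at hp
    omega
  · obtain ⟨hpK, hpH⟩ := mem_product.1 (mem_filter.1 hp).1
    obtain ⟨f, ⟨hf, hfk⟩, f', ⟨hf', hf'k⟩, hgap⟩ :=
      exists_lt_sub_of_lt_width hε.le ((mem_filter.1 hp).2.trans_le (hb _ hpK _ hpH _))
    refine ⟨f, hf, f', hf', ?_, hgap⟩
    calc msNormSq (dataBefore z H p.1) (fun y => f y - f' y)
        ≤ 2 * (9 * β + 12) + 2 * (9 * β + 12) := (msNormSq_sub_le _ f f' (fk p.1 p.2)).trans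
          (by gcongr; exacts [hfk, hf'k])
      _ = 36 * β + 48 := by ring

/-- Lemma 10 of the paper: if each bonus `b^k_h` is dominated by the width of
the confidence region `{f ∈ F : ‖f − f^k_h‖²_{Z^k} ≤ 9β + 12}`, then the number of indices
`(k,h)` whose bonus at the visited point exceeds `ε` is at most `((36β + 48)/ε² + H)·d`,
where `d = dim_E(F, ε)`. -/
theorem count_large_bonus {X : Type*} (H K : ℕ) (hH : 1 ≤ H) (hK : 1 ≤ K)
    (F : Set (X → ℝ)) (hF : ∀ f ∈ F, ∀ x, f x ∈ Set.Icc (0 : ℝ) ((H : ℝ) + 1))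
    (β : ℝ) (hβ : 0 ≤ β) (ε : ℝ) (hε : 0 < ε)
    (d : ℕ) (hd1 : 1 ≤ d) (hd : IsGreatest {n : ℕ | EluderLen F ε n} d)
    (z : ℕ → ℕ → X)
    (fk : ℕ → ℕ → (X → ℝ)) (hfk : ∀ k ∈ Finset.Icc 1 K, ∀ h ∈ Finset.Icc 1 H, fk k h ∈ F)
    (b : ℕ → ℕ → X → ℝ)
    (hb : ∀ k ∈ Finset.Icc 1 K, ∀ h ∈ Finset.Icc 1 H, ∀ x : X,
      b k h x ≤ width {f ∈ F |
        msNormSq (((Finset.Icc 1 (k - 1) ×ˢ Finset.Icc 1 H).val).map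
            (fun q : ℕ × ℕ => z q.1 q.2)) (fun x => f x - fk k h x) ≤ 9 * β + 12} x) :
    ({q : ℕ × ℕ | q.1 ∈ Finset.Icc 1 K ∧ q.2 ∈ Finset.Icc 1 H ∧
        ε < b q.1 q.2 (z q.1 q.2)}.ncard : ℝ) ≤
      ((36 * β + 48) / ε ^ 2 + H) * d :=
  count_large_bonus_general H K F β hβ ε hε d hd z fk b hb
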